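/- arXiv:1905.06704 — 6 statements merged into one kernel-verified Lean document; each statement's English description precedes it below -/
import Mathlib

section
/- Let W : ℝ → ℝ be concave on [0,∞) and let prices satisfy 0 ≤ p^s ≤ p^b. Suppose L ∈ [0,∞) maximizes z ↦ W(z) − p^b·z over [0,∞), U ∈ [0,∞) maximizes z ↦ W(z) − p^s·z over [0,∞), and L ≤ U. Then for every leftover data volume c ≥ 0, the point z* = min(max(c, L), U) maximizes the one-slot trading objective z ↦ W(z) + p^s·max(c − z, 0) − p^b·max(z − c, 0) over [0,∞). In particular, the optimal trading policy is a target interval policy: buy up to L if c < L, sell down to U if c > U, and do not trade if L ≤ c ≤ U. -/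
/-- On a segment, a concave function dominates an endpoint whose value is below
the other endpoint's value. -/
lemma concave_mid_ge {f : ℝ → ℝ} (hf : ConcaveOn ℝ (Set.Ici (0 : ℝ)) f)
    {a m b : ℝ} (ha : (0:ℝ) ≤ a) (h1 : a ≤ m) (h2 : m ≤ b) (hab : f a ≤ f b) :
    f a ≤ f m := by
  have hb : (0:ℝ) ≤ b := le_trans ha (h1.trans h2)
  have hm : m ∈ segment ℝ a b := by
    rw [segment_eq_Icc (h1.trans h2)]; exact ⟨h1, h2⟩
  have := hf.ge_on_segment (Set.mem_Ici.mpr ha) (Set.mem_Ici.mpr hb) hm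
  rw [min_eq_left hab] at this
  exact this

lemma concave_mid_ge' {f : ℝ → ℝ} (hf : ConcaveOn ℝ (Set.Ici (0 : ℝ)) f)
    {a m b : ℝ} (ha : (0:ℝ) ≤ a) (h1 : a ≤ m) (h2 : m ≤ b) (hab : f b ≤ f a) :
    f b ≤ f m := by
  have hb : (0:ℝ) ≤ b := le_trans ha (h1.trans h2)
  have hm : m ∈ segment ℝ a b := by
    rw [segment_eq_Icc (h1.trans h2)]; exact ⟨h1, h2⟩
  have := hf.ge_on_segment (Set.mem_Ici.mpr ha) (Set.mem_Ici.mpr hb) hm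
  rw [min_eq_right hab] at this
  exact this

lemma lin_convexOn (p : ℝ) : ConvexOn ℝ (Set.Ici (0 : ℝ)) (fun x => p * x) :=
  ⟨convex_Ici 0, fun x _ y _ a b _ _ _ => le_of_eq (by simp [smul_eq_mul]; ring)⟩

/-- Single-slot core of Theorem 1 (Plain Trading Policy): with a concave one-slot
payoff `W` and prices `0 ≤ pˢ ≤ pᵇ`, if `L` maximizes `W z - pᵇ·z` and `U`
maximizes `W z - pˢ·z` over `[0,∞)` with `L ≤ U`, then for every leftover volume
`c ≥ 0` the point `min (max c L) U` maximizes the one-slot trading objective. -/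
theorem plain_trading_target_interval
    (W : ℝ → ℝ) (ps pb : ℝ) (hps : 0 ≤ ps) (hpspb : ps ≤ pb)
    (hW : ConcaveOn ℝ (Set.Ici (0 : ℝ)) W)
    (L U : ℝ) (hL : L ∈ Set.Ici (0 : ℝ)) (hU : U ∈ Set.Ici (0 : ℝ))
    (hLmax : ∀ z ∈ Set.Ici (0 : ℝ), W z - pb * z ≤ W L - pb * L)
    (hUmax : ∀ z ∈ Set.Ici (0 : ℝ), W z - ps * z ≤ W U - ps * U)
    (hLU : L ≤ U)
    (c : ℝ) (hc : 0 ≤ c) :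
    min (max c L) U ∈ Set.Ici (0 : ℝ) ∧
    ∀ z ∈ Set.Ici (0 : ℝ),
      W z + ps * max (c - z) 0 - pb * max (z - c) 0 ≤
        W (min (max c L) U) + ps * max (c - min (max c L) U) 0
          - pb * max (min (max c L) U - c) 0 := by
  simp only [Set.mem_Ici] at hL hU
  have hzstar : (0:ℝ) ≤ min (max c L) U := le_min (le_max_of_le_right hL) hU
  refine ⟨Set.mem_Ici.mpr hzstar, ?_⟩
  intro z hz
  simp only [Set.mem_Ici] at hz
  rcases le_total c L with h1 | h1
  · -- buy up to L
    have heq : min (max c L) U = L := by rw [max_eq_right h1, min_eq_left hLU]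
    rw [heq,
      show max (c - L) 0 = 0 from max_eq_right (by linarith),
      show max (L - c) 0 = L - c from max_eq_left (by linarith)]
    rcases le_total z c with h2 | h2
    · rw [show max (c - z) 0 = c - z from max_eq_left (by linarith),
        show max (z - c) 0 = 0 from max_eq_right (by linarith)]
      have hb := hLmax z hz
      nlinarith [mul_nonneg (sub_nonneg.mpr hpspb) (sub_nonneg.mpr h2)]
    · rw [show max (c - z) 0 = 0 from max_eq_right (by linarith),
        show max (z - c) 0 = z - c from max_eq_left (by linarith)]
      have hb := hLmax z hz
      linarith
  · rcases le_total c U with h2 | h2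
    · -- no trade : z* = c
      have heq : min (max c L) U = c := by rw [max_eq_left h1, min_eq_left h2]
      rw [heq]
      simp only [sub_self, max_self, mul_zero, add_zero, sub_zero]
      rcases le_total z c with h3 | h3
      · rw [show max (c - z) 0 = c - z from max_eq_left (by linarith),
          show max (z - c) 0 = 0 from max_eq_right (by linarith)]
        have key : W z - ps * z ≤ W c - ps * c :=
          concave_mid_ge (f := fun x => W x - ps * x)
            (hW.sub (lin_convexOn ps)) hz h3 h2 (hUmax z hz)
        linarith
      · rw [show max (c - z) 0 = 0 from max_eq_right (by linarith),
          show max (z - c) 0 = z - c from max_eq_left (by linarith)]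
        have key : W z - pb * z ≤ W c - pb * c := by
          have := concave_mid_ge' (f := fun x => W x - pb * x)
            (hW.sub (lin_convexOn pb)) hL h1 h3 (hLmax z hz)
          simpa using this
        linarith
    · -- sell down to U
      have heq : min (max c L) U = U := min_eq_right (le_max_of_le_left h2)
      rw [heq,
        show max (c - U) 0 = c - U from max_eq_left (by linarith),
        show max (U - c) 0 = 0 from max_eq_right (by linarith)]
      rcases le_total z c with h3 | h3
      · rw [show max (c - z) 0 = c - z from max_eq_left (by linarith),
          show max (z - c) 0 = 0 from max_eq_right (by linarith)]
        have hb := hUmax z hz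
        linarith
      · rw [show max (c - z) 0 = 0 from max_eq_right (by linarith),
          show max (z - c) 0 = z - c from max_eq_left (by linarith)]
        have hb := hUmax z hz
        nlinarith [mul_nonneg (sub_nonneg.mpr hpspb) (sub_nonneg.mpr h3)]
end

section
/- Let W : ℝ → ℝ be concave on [0,∞), let 0 ≤ p^s ≤ p^b, let L ∈ [0,∞) maximize z ↦ W(z) − p^b·z over [0,∞), let U ∈ [0,∞) maximize z ↦ W(z) − p^s·z over [0,∞), and suppose L ≤ U. Then the optimal one-slot trading value T(c) = sup_{z ≥ 0} (W(z) + p^s·max(c − z, 0) − p^b·max(z − c, 0)) satisfies: T(c) = W(L) − p^b·(L − c) for 0 ≤ c < L; T(c) = W(c) for L ≤ c ≤ U; and T(c) = W(U) + p^s·(c − U) for c > U. -/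
/-!
Since `pˢ ≤ pᵇ`, the payoff of moving from `c` to `z` is at most both `W z - pˢ z + pˢ c` and
`W z - pᵇ z + pᵇ c`, with equality in the first for `z ≤ c` and in the second for `z ≥ c`.
Hence for `c ≤ L` the supremum is attained at `L` and for `c ≥ U` at `U`. For `L ≤ c ≤ U`
it is attained at `c` itself: a concave function is nondecreasing to the left of a maximiser
and nonincreasing to its right, so `W z - pˢ z ≤ W c - pˢ c` for `z ≤ c ≤ U` and
`W z - pᵇ z ≤ W c - pᵇ c` for `L ≤ c ≤ z`.
-/

open Set

theorem IsMaxOn.csSup_image_eq {α β : Type*} [ConditionallyCompleteLattice β] {f : α → β}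
    {s : Set α} {a : α} (hmax : IsMaxOn f s a) (ha : a ∈ s) : sSup (f '' s) = f a :=
  IsGreatest.csSup_eq
    ⟨mem_image_of_mem f ha, forall_mem_image.2 fun _ hx ↦ isMaxOn_iff.1 hmax _ hx⟩

section Concave

variable {𝕜 β : Type*} [Field 𝕜] [LinearOrder 𝕜] [IsStrictOrderedRing 𝕜]
  [AddCommMonoid β] [LinearOrder β] [IsOrderedCancelAddMonoid β] [Module 𝕜 β]
  [PosSMulStrictMono 𝕜 β] {s : Set 𝕜} {f : 𝕜 → β} {a : 𝕜}

theorem ConcaveOn.monotoneOn_of_isMaxOn (hf : ConcaveOn 𝕜 s f) (hmax : IsMaxOn f s a)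
    (ha : a ∈ s) : MonotoneOn f (s ∩ Iic a) := by
  rintro x ⟨hx, -⟩ y ⟨hy, hya⟩ hxy
  rcases hya.lt_or_eq with hya | rfl
  · exact hf.left_le_of_le_right'' hx ha hxy hya (isMaxOn_iff.1 hmax y hy)
  · exact isMaxOn_iff.1 hmax x hx

theorem ConcaveOn.antitoneOn_of_isMaxOn (hf : ConcaveOn 𝕜 s f) (hmax : IsMaxOn f s a)
    (ha : a ∈ s) : AntitoneOn f (s ∩ Ici a) := by
  rintro x ⟨hx, hax⟩ y ⟨hy, -⟩ hxy
  rcases hax.lt_or_eq with hax | rfl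
  · exact hf.right_le_of_le_left'' ha hy hax hxy (isMaxOn_iff.1 hmax x hx)
  · exact isMaxOn_iff.1 hmax y hy

end Concave

theorem ConcaveOn.sub_const_mul {s : Set ℝ} {W : ℝ → ℝ} (hW : ConcaveOn ℝ s W) (p : ℝ) :
    ConcaveOn ℝ s fun z ↦ W z - p * z :=
  hW.sub ((LinearMap.mulLeft ℝ p).convexOn hW.1)

section Trading

variable (W : ℝ → ℝ) (ps pb c : ℝ)

def tradingPayoff (z : ℝ) : ℝ := W z + ps * max (c - z) 0 - pb * max (z - c) 0

variable {W ps pb c}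

theorem tradingPayoff_of_le {z : ℝ} (hz : z ≤ c) :
    tradingPayoff W ps pb c z = W z - ps * z + ps * c := by
  simp only [tradingPayoff, max_eq_left (sub_nonneg.2 hz), max_eq_right (sub_nonpos.2 hz)]
  ring

theorem tradingPayoff_of_ge {z : ℝ} (hz : c ≤ z) :
    tradingPayoff W ps pb c z = W z - pb * z + pb * c := by
  simp only [tradingPayoff, max_eq_left (sub_nonneg.2 hz), max_eq_right (sub_nonpos.2 hz)]
  ring

theorem tradingPayoff_self : tradingPayoff W ps pb c c = W c := by
  simp [tradingPayoff]

theorem tradingPayoff_le_sell (hp : ps ≤ pb) (z : ℝ) :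
    tradingPayoff W ps pb c z ≤ W z - ps * z + ps * c := by
  rcases le_total z c with hz | hz
  · exact (tradingPayoff_of_le hz).le
  · rw [tradingPayoff_of_ge hz]
    nlinarith

theorem tradingPayoff_le_buy (hp : ps ≤ pb) (z : ℝ) :
    tradingPayoff W ps pb c z ≤ W z - pb * z + pb * c := by
  rcases le_total z c with hz | hz
  · rw [tradingPayoff_of_le hz]
    nlinarith
  · exact (tradingPayoff_of_ge hz).le

end Trading

section Thresholds

variable {W : ℝ → ℝ} {ps pb c L U : ℝ} {s : Set ℝ}

theorem isMaxOn_tradingPayoff_of_le_buyUpTo (hp : ps ≤ pb)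
    (hL : IsMaxOn (fun z ↦ W z - pb * z) s L) (hcL : c ≤ L) :
    IsMaxOn (tradingPayoff W ps pb c) s L := isMaxOn_iff.2 fun z hz ↦ by
  have := tradingPayoff_le_buy (W := W) (c := c) hp z
  have := isMaxOn_iff.1 hL z hz
  rw [tradingPayoff_of_ge hcL]
  linarith

theorem isMaxOn_tradingPayoff_of_sellDownTo_le (hp : ps ≤ pb)
    (hU : IsMaxOn (fun z ↦ W z - ps * z) s U) (hUc : U ≤ c) :
    IsMaxOn (tradingPayoff W ps pb c) s U := isMaxOn_iff.2 fun z hz ↦ by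
  have := tradingPayoff_le_sell (W := W) (c := c) hp z
  have := isMaxOn_iff.1 hU z hz
  rw [tradingPayoff_of_le hUc]
  linarith

theorem isMaxOn_tradingPayoff_self (hW : ConcaveOn ℝ s W) (hp : ps ≤ pb)
    (hL : IsMaxOn (fun z ↦ W z - pb * z) s L) (hU : IsMaxOn (fun z ↦ W z - ps * z) s U)
    (hLs : L ∈ s) (hUs : U ∈ s) (hLc : L ≤ c) (hcU : c ≤ U) :
    IsMaxOn (tradingPayoff W ps pb c) s c := isMaxOn_iff.2 fun z hz ↦ by
  have hc : c ∈ s := hW.1.ordConnected.out hLs hUs ⟨hLc, hcU⟩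
  rw [tradingPayoff_self]
  rcases le_total z c with hzc | hcz
  · have := (hW.sub_const_mul ps).monotoneOn_of_isMaxOn hU hUs
      ⟨hz, hzc.trans hcU⟩ ⟨hc, hcU⟩ hzc
    have := tradingPayoff_le_sell (W := W) (c := c) hp z
    linarith
  · have := (hW.sub_const_mul pb).antitoneOn_of_isMaxOn hL hLs
      ⟨hc, hLc⟩ ⟨hz, hLc.trans hcz⟩ hcz
    have := tradingPayoff_le_buy (W := W) (c := c) hp z
    linarith

end Thresholds

theorem plain_trading_value_general
    (W : ℝ → ℝ) (ps pb : ℝ) (hpspb : ps ≤ pb)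
    (hW : ConcaveOn ℝ (Set.Ici (0 : ℝ)) W)
    (L U : ℝ) (hL : L ∈ Set.Ici (0 : ℝ)) (hU : U ∈ Set.Ici (0 : ℝ))
    (hLmax : ∀ z ∈ Set.Ici (0 : ℝ), W z - pb * z ≤ W L - pb * L)
    (hUmax : ∀ z ∈ Set.Ici (0 : ℝ), W z - ps * z ≤ W U - ps * U)
    (T : ℝ → ℝ)
    (hT : ∀ c, T c =
      sSup ((fun z => W z + ps * max (c - z) 0 - pb * max (z - c) 0) '' Set.Ici (0 : ℝ))) :
    (∀ c, 0 ≤ c → c < L → T c = W L - pb * (L - c)) ∧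
    (∀ c, L ≤ c → c ≤ U → T c = W c) ∧
    (∀ c, U < c → T c = W U + ps * (c - U)) := by
  have hT' : ∀ c, T c = sSup (tradingPayoff W ps pb c '' Ici 0) := hT
  refine ⟨fun c _ hcL ↦ ?_, fun c hLc hcU ↦ ?_, fun c hUc ↦ ?_⟩
  · rw [hT', (isMaxOn_tradingPayoff_of_le_buyUpTo hpspb hLmax hcL.le).csSup_image_eq hL,
      tradingPayoff_of_ge hcL.le]
    ring
  · rw [hT', (isMaxOn_tradingPayoff_self hW hpspb hLmax hUmax hL hU hLc hcU).csSup_image_eq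
      (mem_Ici.2 (hL.trans hLc)), tradingPayoff_self]
  · rw [hT', (isMaxOn_tradingPayoff_of_sellDownTo_le hpspb hUmax hUc.le).csSup_image_eq hU,
      tradingPayoff_of_le hUc.le]
    ring

/-- Value of the optimal one-slot trading problem: with concave `W`, prices
`0 ≤ pˢ ≤ pᵇ`, buy-up-to threshold `L` and sell-down-to threshold `U` (`L ≤ U`),
the optimal one-slot trading value `T c = sup_{z ≥ 0} (W z + pˢ·(c-z)⁺ - pᵇ·(z-c)⁺)`
equals `W L - pᵇ·(L - c)` for `0 ≤ c < L`, `W c` for `L ≤ c ≤ U`, and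
`W U + pˢ·(c - U)` for `c > U`. -/
theorem plain_trading_value
    (W : ℝ → ℝ) (ps pb : ℝ) (hps : 0 ≤ ps) (hpspb : ps ≤ pb)
    (hW : ConcaveOn ℝ (Set.Ici (0 : ℝ)) W)
    (L U : ℝ) (hL : L ∈ Set.Ici (0 : ℝ)) (hU : U ∈ Set.Ici (0 : ℝ))
    (hLmax : ∀ z ∈ Set.Ici (0 : ℝ), W z - pb * z ≤ W L - pb * L)
    (hUmax : ∀ z ∈ Set.Ici (0 : ℝ), W z - ps * z ≤ W U - ps * U)
    (hLU : L ≤ U)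
    (T : ℝ → ℝ)
    (hT : ∀ c, T c =
      sSup ((fun z => W z + ps * max (c - z) 0 - pb * max (z - c) 0) '' Set.Ici (0 : ℝ))) :
    (∀ c, 0 ≤ c → c < L → T c = W L - pb * (L - c)) ∧
    (∀ c, L ≤ c → c ≤ U → T c = W c) ∧
    (∀ c, U < c → T c = W U + ps * (c - U)) :=
  plain_trading_value_general W ps pb hpspb hW L U hL hU hLmax hUmax T hT
end

section
/- Let W : ℝ → ℝ be concave and nondecreasing on [0,∞) and bounded above on [0,∞), and let prices satisfy 0 ≤ p^s ≤ p^b. Define the post-trading value T(c) = sup_{z ≥ 0} (W(z) + p^s·max(c − z, 0) − p^b·max(z − c, 0)) for c ≥ 0. Then T is finite and concave on [0,∞), and for all 0 ≤ c ≤ c' it satisfies p^s·(c' − c) ≤ T(c') − T(c) ≤ p^b·(c' − c); in particular T is nondecreasing and p^b-Lipschitz on [0,∞). -/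
/-- Combination of suprema: if `a*u + b*v ≤ M` for all `u ∈ S`, `v ∈ S'`, then
`a * sSup S + b * sSup S' ≤ M` (for nonneg `a, b` and nonempty sets). -/
lemma combo_sSup_le {S S' : Set ℝ} (hS : S.Nonempty) (hS' : S'.Nonempty)
    {a b M : ℝ} (ha : 0 ≤ a) (hb : 0 ≤ b)
    (h : ∀ u ∈ S, ∀ v ∈ S', a * u + b * v ≤ M) :
    a * sSup S + b * sSup S' ≤ M := by
  refine le_of_forall_pos_le_add fun ε hε => ?_
  set δ := ε / (a + b + 1) with hδ
  have hδpos : 0 < δ := div_pos hε (by linarith)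
  obtain ⟨u, hu, hu'⟩ := exists_lt_of_lt_csSup hS (show sSup S - δ < sSup S by linarith)
  obtain ⟨v, hv, hv'⟩ := exists_lt_of_lt_csSup hS' (show sSup S' - δ < sSup S' by linarith)
  have h1 : a * sSup S ≤ a * u + a * δ := by nlinarith
  have h2 : b * sSup S' ≤ b * v + b * δ := by nlinarith
  have h3 := h u hu v hv
  have h5 : δ * (a + b + 1) = ε := div_mul_cancel₀ ε (by linarith)
  nlinarith

private lemma max_sub_max_neg (x : ℝ) : max x 0 - max (-x) 0 = x := by
  rcases le_total x 0 with h | h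
  · rw [max_eq_right h, max_eq_left (neg_nonneg.2 h)]; ring
  · rw [max_eq_left h, max_eq_right (neg_nonpos.2 h)]; ring

/-- Preservation of structure through the trading step: for `W` concave,
nondecreasing, and bounded above on `[0,∞)` and prices `0 ≤ pˢ ≤ pᵇ`, the
post-trading value `T c = sup_{z ≥ 0} (W z + pˢ·(c-z)⁺ - pᵇ·(z-c)⁺)` is finite
(the supremand is bounded above) and concave on `[0,∞)`, and satisfies the
sandwich `pˢ·(c' - c) ≤ T c' - T c ≤ pᵇ·(c' - c)` for `0 ≤ c ≤ c'`; in
particular `T` is nondecreasing and `pᵇ`-Lipschitz on `[0,∞)`. -/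
theorem post_trading_value_properties
    (W : ℝ → ℝ)
    (hWconc : ConcaveOn ℝ (Set.Ici (0 : ℝ)) W)
    (hWmono : MonotoneOn W (Set.Ici (0 : ℝ)))
    (hWbdd : BddAbove (W '' Set.Ici (0 : ℝ)))
    (ps pb : ℝ) (hps : 0 ≤ ps) (hpspb : ps ≤ pb)
    (T : ℝ → ℝ)
    (hT : ∀ c, T c =
      sSup ((fun z => W z + ps * max (c - z) 0 - pb * max (z - c) 0) '' Set.Ici (0 : ℝ))) :
    (∀ c, 0 ≤ c →
      BddAbove ((fun z => W z + ps * max (c - z) 0 - pb * max (z - c) 0) '' Set.Ici (0 : ℝ))) ∧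
    ConcaveOn ℝ (Set.Ici (0 : ℝ)) T ∧
    (∀ c c' : ℝ, 0 ≤ c → c ≤ c' →
      ps * (c' - c) ≤ T c' - T c ∧ T c' - T c ≤ pb * (c' - c)) ∧
    MonotoneOn T (Set.Ici (0 : ℝ)) ∧
    (∀ c c' : ℝ, 0 ≤ c → 0 ≤ c' → |T c - T c'| ≤ pb * |c - c'|) := by
  have hpb : 0 ≤ pb := le_trans hps hpspb
  obtain ⟨M, hM⟩ := hWbdd
  -- boundedness above of the supremand, for every c
  have hbdd : ∀ c : ℝ,
      BddAbove ((fun z => W z + ps * max (c - z) 0 - pb * max (z - c) 0) '' Set.Ici (0 : ℝ)) := by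
    intro c
    refine ⟨M + ps * max c 0, ?_⟩
    rintro _ ⟨z, hz, rfl⟩
    have hz0 : (0:ℝ) ≤ z := hz
    have h1 : W z ≤ M := hM ⟨z, hz, rfl⟩
    have h2 : ps * max (c - z) 0 ≤ ps * max c 0 :=
      mul_le_mul_of_nonneg_left (max_le_max (by linarith) le_rfl) hps
    have h3 : 0 ≤ pb * max (z - c) 0 := mul_nonneg hpb (le_max_right _ _)
    simp only
    linarith
  have hne : ∀ c : ℝ,
      ((fun z => W z + ps * max (c - z) 0 - pb * max (z - c) 0) '' Set.Ici (0 : ℝ)).Nonempty :=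
    fun c => ⟨_, 0, Set.self_mem_Ici, rfl⟩
  -- rewrite the supremand using a min
  have hmin : ∀ c z : ℝ, W z + ps * max (c - z) 0 - pb * max (z - c) 0
      = W z + min (ps * (c - z)) (pb * (c - z)) := by
    intro c z
    rcases le_total z c with h | h
    · rw [max_eq_left (by linarith : (0:ℝ) ≤ c - z), max_eq_right (by linarith : z - c ≤ 0),
        min_eq_left (mul_le_mul_of_nonneg_right hpspb (by linarith))]
      ring
    · rw [max_eq_right (by linarith : c - z ≤ 0), max_eq_left (by linarith : (0:ℝ) ≤ z - c),
        min_eq_right (mul_le_mul_of_nonpos_right hpspb (by linarith))]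
      ring
  -- pointwise sandwich in c
  have pt : ∀ c c' z : ℝ, c ≤ c' →
      ps * (c' - c) ≤ (W z + ps * max (c' - z) 0 - pb * max (z - c') 0)
        - (W z + ps * max (c - z) 0 - pb * max (z - c) 0) ∧
      (W z + ps * max (c' - z) 0 - pb * max (z - c') 0)
        - (W z + ps * max (c - z) 0 - pb * max (z - c) 0) ≤ pb * (c' - c) := by
    intro c c' z hcc'
    have hA : (0:ℝ) ≤ max (c' - z) 0 - max (c - z) 0 :=
      sub_nonneg.2 (max_le_max (by linarith) le_rfl)
    have hB : (0:ℝ) ≤ max (z - c) 0 - max (z - c') 0 :=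
      sub_nonneg.2 (max_le_max (by linarith) le_rfl)
    have e1 : max (c' - z) 0 - max (z - c') 0 = c' - z := by
      have := max_sub_max_neg (c' - z); rwa [neg_sub] at this
    have e2 : max (c - z) 0 - max (z - c) 0 = c - z := by
      have := max_sub_max_neg (c - z); rwa [neg_sub] at this
    have hAB : (max (c' - z) 0 - max (c - z) 0) + (max (z - c) 0 - max (z - c') 0) = c' - c := by
      linarith
    have k1 : ps * (max (c' - z) 0 - max (c - z) 0) ≤ pb * (max (c' - z) 0 - max (c - z) 0) :=
      mul_le_mul_of_nonneg_right hpspb hA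
    have k2 : ps * (max (z - c) 0 - max (z - c') 0) ≤ pb * (max (z - c) 0 - max (z - c') 0) :=
      mul_le_mul_of_nonneg_right hpspb hB
    have hL : ps * (c' - c) =
        ps * (max (c' - z) 0 - max (c - z) 0) + ps * (max (z - c) 0 - max (z - c') 0) := by
      rw [← hAB]; ring
    have hU : pb * (c' - c) =
        pb * (max (c' - z) 0 - max (c - z) 0) + pb * (max (z - c) 0 - max (z - c') 0) := by
      rw [← hAB]; ring
    have hdiff : (W z + ps * max (c' - z) 0 - pb * max (z - c') 0)
        - (W z + ps * max (c - z) 0 - pb * max (z - c) 0)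
        = ps * (max (c' - z) 0 - max (c - z) 0) + pb * (max (z - c) 0 - max (z - c') 0) := by
      ring
    constructor <;> linarith
  -- sandwich at the level of T
  have hsand : ∀ c c' : ℝ, 0 ≤ c → c ≤ c' →
      ps * (c' - c) ≤ T c' - T c ∧ T c' - T c ≤ pb * (c' - c) := by
    intro c c' hc hcc'
    rw [hT c, hT c']
    constructor
    · have : sSup ((fun z => W z + ps * max (c - z) 0 - pb * max (z - c) 0) '' Set.Ici (0 : ℝ))
          ≤ sSup ((fun z => W z + ps * max (c' - z) 0 - pb * max (z - c') 0) '' Set.Ici (0 : ℝ))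
            - ps * (c' - c) := by
        refine csSup_le (hne c) ?_
        rintro _ ⟨z, hz, rfl⟩
        have h1 := (pt c c' z hcc').1
        have h2 : W z + ps * max (c' - z) 0 - pb * max (z - c') 0
            ≤ sSup ((fun z => W z + ps * max (c' - z) 0 - pb * max (z - c') 0) ''
              Set.Ici (0 : ℝ)) := le_csSup (hbdd c') ⟨z, hz, rfl⟩
        simp only at h1 h2 ⊢
        linarith
      linarith
    · have : sSup ((fun z => W z + ps * max (c' - z) 0 - pb * max (z - c') 0) '' Set.Ici (0 : ℝ))
          ≤ sSup ((fun z => W z + ps * max (c - z) 0 - pb * max (z - c) 0) '' Set.Ici (0 : ℝ))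
            + pb * (c' - c) := by
        refine csSup_le (hne c') ?_
        rintro _ ⟨z, hz, rfl⟩
        have h1 := (pt c c' z hcc').2
        have h2 : W z + ps * max (c - z) 0 - pb * max (z - c) 0
            ≤ sSup ((fun z => W z + ps * max (c - z) 0 - pb * max (z - c) 0) ''
              Set.Ici (0 : ℝ)) := le_csSup (hbdd c) ⟨z, hz, rfl⟩
        simp only at h1 h2 ⊢
        linarith
      linarith
  -- concavity
  have hconc : ConcaveOn ℝ (Set.Ici (0 : ℝ)) T := by
    refine ⟨convex_Ici 0, ?_⟩
    intro c hc c' hc' a b ha hb hab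
    simp only [smul_eq_mul]
    rw [hT c, hT c', hT (a * c + b * c')]
    refine combo_sSup_le (hne c) (hne c') ha hb ?_
    rintro _ ⟨z, hz, rfl⟩ _ ⟨z', hz', rfl⟩
    have hz0 : (0:ℝ) ≤ z := hz
    have hz'0 : (0:ℝ) ≤ z' := hz'
    have hmem : a * z + b * z' ∈ Set.Ici (0:ℝ) :=
      add_nonneg (mul_nonneg ha hz0) (mul_nonneg hb hz'0)
    have hW : a * W z + b * W z' ≤ W (a * z + b * z') := by
      have := hWconc.2 hz hz' ha hb hab
      simpa [smul_eq_mul] using this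
    have hps1 : ps * ((a * c + b * c') - (a * z + b * z'))
        = a * (ps * (c - z)) + b * (ps * (c' - z')) := by ring
    have hpb1 : pb * ((a * c + b * c') - (a * z + b * z'))
        = a * (pb * (c - z)) + b * (pb * (c' - z')) := by ring
    have m1 : a * min (ps * (c - z)) (pb * (c - z)) ≤ a * (ps * (c - z)) :=
      mul_le_mul_of_nonneg_left (min_le_left _ _) ha
    have m2 : a * min (ps * (c - z)) (pb * (c - z)) ≤ a * (pb * (c - z)) :=
      mul_le_mul_of_nonneg_left (min_le_right _ _) ha
    have m3 : b * min (ps * (c' - z')) (pb * (c' - z')) ≤ b * (ps * (c' - z')) :=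
      mul_le_mul_of_nonneg_left (min_le_left _ _) hb
    have m4 : b * min (ps * (c' - z')) (pb * (c' - z')) ≤ b * (pb * (c' - z')) :=
      mul_le_mul_of_nonneg_left (min_le_right _ _) hb
    have kmin : a * min (ps * (c - z)) (pb * (c - z))
        + b * min (ps * (c' - z')) (pb * (c' - z'))
        ≤ min (ps * ((a * c + b * c') - (a * z + b * z')))
            (pb * ((a * c + b * c') - (a * z + b * z'))) := by
      refine le_min ?_ ?_ <;> [rw [hps1]; rw [hpb1]] <;> linarith
    have hfin : a * (W z + ps * max (c - z) 0 - pb * max (z - c) 0)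
        + b * (W z' + ps * max (c' - z') 0 - pb * max (z' - c') 0)
        ≤ W (a * z + b * z') + ps * max ((a * c + b * c') - (a * z + b * z')) 0
          - pb * max ((a * z + b * z') - (a * c + b * c')) 0 := by
      rw [hmin c z, hmin c' z', hmin (a * c + b * c') (a * z + b * z')]
      nlinarith [kmin, hW]
    have hle : W (a * z + b * z') + ps * max ((a * c + b * c') - (a * z + b * z')) 0
          - pb * max ((a * z + b * z') - (a * c + b * c')) 0
        ≤ sSup ((fun z => W z + ps * max ((a * c + b * c') - z) 0
            - pb * max (z - (a * c + b * c')) 0) '' Set.Ici (0 : ℝ)) :=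
      le_csSup (hbdd _) ⟨a * z + b * z', hmem, rfl⟩
    simp only at hfin hle ⊢
    linarith
  -- monotone
  have hmonoT : MonotoneOn T (Set.Ici (0 : ℝ)) := by
    intro c hc c' hc' hcc'
    have h1 := (hsand c c' hc hcc').1
    have h2 : 0 ≤ ps * (c' - c) := mul_nonneg hps (by linarith)
    linarith
  refine ⟨fun c _ => hbdd c, hconc, hsand, hmonoT, ?_⟩
  intro c c' hc hc'
  rcases le_total c c' with h | h
  · obtain ⟨l, u⟩ := hsand c c' hc h
    have h2 : 0 ≤ ps * (c' - c) := mul_nonneg hps (by linarith)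
    rw [abs_of_nonpos (by linarith : T c - T c' ≤ 0),
      abs_of_nonpos (by linarith : c - c' ≤ 0)]
    nlinarith
  · obtain ⟨l, u⟩ := hsand c' c hc' h
    have h2 : 0 ≤ ps * (c - c') := mul_nonneg hps (by linarith)
    rw [abs_of_nonneg (by linarith : 0 ≤ T c - T c'),
      abs_of_nonneg (by linarith : 0 ≤ c - c')]
    nlinarith
end

section
/- Let μ be a Borel probability measure on ℝ supported on [0,∞) (i.e., μ((−∞,0)) = 0) with finite mean ∫ x dμ(x) < ∞, let π ≥ 0, and let G : ℝ → ℝ be concave, nondecreasing, and π-Lipschitz. Define H(z) = ∫ ( G(max(z − x, 0)) − π·max(x − z, 0) ) dμ(x). Then H is well defined (the integrand is μ-integrable for every z), concave on ℝ, nondecreasing on ℝ, and π-Lipschitz. -/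
/-!
For a `π`-Lipschitz `G`, the one-slot value `G (y⁺) - π y⁻` equals `min (G y) (G 0 + π y)`:
the Lipschitz bound says exactly that `G` never rises faster than the penalty line through
`(0, G 0)`. This minimum is concave, nondecreasing and `π`-Lipschitz, and `H` is its average
over the translates `y = z - x`, which keeps all three properties; the Lipschitz bound together
with the finite mean of `μ` also gives integrability.
-/

open MeasureTheory NNReal

section ParametricIntegral

variable {α : Type*} [MeasurableSpace α] {μ : Measure α}

theorem concaveOn_integral {E : Type*} [AddCommGroup E] [Module ℝ E] {s : Set E}
    (hs : Convex ℝ s) {f : E → α → ℝ} (hf : ∀ x, ConcaveOn ℝ s (f · x))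
    (hint : ∀ z ∈ s, Integrable (f z) μ) : ConcaveOn ℝ s fun z => ∫ x, f z x ∂μ := by
  refine ⟨hs, fun z hz z' hz' a b ha hb hab => ?_⟩
  simp only [smul_eq_mul, ← integral_const_mul]
  rw [← integral_add ((hint z hz).const_mul a) ((hint z' hz').const_mul b)]
  exact integral_mono (((hint z hz).const_mul a).add ((hint z' hz').const_mul b))
    (hint _ (hs hz hz' ha hb hab)) fun x => (hf x).2 hz hz' ha hb hab

theorem monotone_integral {β : Type*} [Preorder β] {f : β → α → ℝ}
    (hf : ∀ x, Monotone (f · x)) (hint : ∀ z, Integrable (f z) μ) :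
    Monotone fun z => ∫ x, f z x ∂μ :=
  fun _ _ h => integral_mono (hint _) (hint _) fun x => hf x h

theorem lipschitzWith_integral {X E : Type*} [PseudoMetricSpace X] [NormedAddCommGroup E]
    [NormedSpace ℝ E] [IsProbabilityMeasure μ] {K : ℝ≥0} {f : X → α → E}
    (hf : ∀ x, LipschitzWith K (f · x)) (hint : ∀ z, Integrable (f z) μ) :
    LipschitzWith K fun z => ∫ x, f z x ∂μ := by
  refine LipschitzWith.of_dist_le_mul fun z z' => ?_
  rw [dist_eq_norm, ← integral_sub (hint z) (hint z')]
  simpa using norm_integral_le_of_norm_le_const (μ := μ) (C := K * dist z z')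
    (.of_forall fun x => by simpa [dist_eq_norm] using (hf x).dist_le_mul z z')

theorem LipschitzWith.integrable_comp {E F : Type*} [NormedAddCommGroup E]
    [NormedAddCommGroup F] [IsFiniteMeasure μ] {K : ℝ≥0} {Φ : E → F} {f : α → E}
    (hΦ : LipschitzWith K Φ) (hf : Integrable f μ) : Integrable (Φ ∘ f) μ := by
  have hΦ₀ : LipschitzWith K fun y => Φ y - Φ 0 :=
    LipschitzWith.of_dist_le_mul fun a b => by simpa [dist_eq_norm] using hΦ.dist_le_mul a b
  have := (hΦ₀.comp_memLp (sub_self _) (memLp_one_iff_integrable.2 hf)).integrable le_rfl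
  exact (this.add (integrable_const (Φ 0))).congr (.of_forall fun x => by simp)

end ParametricIntegral

theorem LipschitzWith.apply_posPart_sub_mul_negPart {G : ℝ → ℝ} {K : ℝ≥0}
    (hG : LipschitzWith K G) (y : ℝ) : G y⁺ - K * y⁻ = min (G y) (G 0 + K * y) := by
  rcases le_total 0 y with hy | hy
  · have := hG.le_add_mul y 0
    rw [Real.dist_0_eq_abs, abs_of_nonneg hy] at this
    rw [posPart_of_nonneg hy, negPart_of_nonneg hy, mul_zero, sub_zero, min_eq_left this]
  · have := hG.le_add_mul 0 y
    rw [dist_comm, Real.dist_0_eq_abs, abs_of_nonpos hy] at this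
    rw [posPart_of_nonpos hy, negPart_of_nonpos hy, min_eq_right (by linarith)]
    ring

theorem consumption_step_preservation_general
    (μ : Measure ℝ) [IsProbabilityMeasure μ]
    (hmean : Integrable (fun x => x) μ)
    (π : ℝ) (hπ : 0 ≤ π)
    (G : ℝ → ℝ)
    (hGconc : ConcaveOn ℝ Set.univ G)
    (hGmono : Monotone G)
    (hGlip : ∀ a b : ℝ, |G a - G b| ≤ π * |a - b|)
    (H : ℝ → ℝ)
    (hH : ∀ z, H z = ∫ x, (G (max (z - x) 0) - π * max (x - z) 0) ∂μ) :
    (∀ z : ℝ, Integrable (fun x => G (max (z - x) 0) - π * max (x - z) 0) μ) ∧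
    ConcaveOn ℝ Set.univ H ∧ Monotone H ∧
      ∀ z z' : ℝ, |H z - H z'| ≤ π * |z - z'| := by
  lift π to ℝ≥0 using hπ
  have hG : LipschitzWith π G :=
    LipschitzWith.of_dist_le_mul fun a b => by simpa only [Real.dist_eq] using hGlip a b
  set Φ : ℝ → ℝ := fun y => min (G y) (G 0 + π * y)
  have hΦconc : ConcaveOn ℝ Set.univ Φ := hGconc.inf <|
    (concaveOn_const _ convex_univ).add ((LinearMap.mulLeft ℝ (π : ℝ)).concaveOn convex_univ)
  have hΦmono : Monotone Φ := hGmono.min (monotone_const.add (monotone_id.const_mul π.2))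
  have hΦlip : LipschitzWith π Φ := by
    simpa using hG.min (LipschitzWith.of_dist_le_mul fun a b => by
      simp [Real.dist_eq, ← mul_sub, abs_mul] : LipschitzWith π fun y => G 0 + π * y)
  have hintegrand (z : ℝ) :
      (fun x => G (max (z - x) 0) - π * max (x - z) 0) = fun x => Φ (z - x) := by
    funext x
    rw [← neg_sub z x]
    exact hG.apply_posPart_sub_mul_negPart (z - x)
  have hint (z : ℝ) : Integrable (fun x => Φ (z - x)) μ :=
    hΦlip.integrable_comp ((integrable_const z).sub hmean)
  obtain rfl : H = fun z => ∫ x, Φ (z - x) ∂μ := funext fun z => by rw [hH, hintegrand]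
  refine ⟨fun z => hintegrand z ▸ hint z, ?_, ?_, fun z z' => ?_⟩
  · refine concaveOn_integral convex_univ (fun x => ?_) fun z _ => hint z
    simpa [sub_eq_add_neg, Function.comp_def] using hΦconc.translate_left (-x)
  · exact monotone_integral (fun x _ _ h => hΦmono (sub_le_sub_right h x)) hint
  · refine (lipschitzWith_integral (fun x => ?_) hint).dist_le_mul z z'
    simpa [Function.comp_def] using hΦlip.comp (IsometryEquiv.subRight x).isometry.lipschitz

/-- Preservation of structure through the consumption step: for demand
distribution `μ` supported on `[0,∞)` with finite mean, overage price `π ≥ 0`,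
and a continuation value `G` which is concave, nondecreasing, and `π`-Lipschitz,
the function `H z = ∫ (G((z-x)⁺) - π·(x-z)⁺) dμ` is well defined, concave,
nondecreasing, and `π`-Lipschitz. -/
theorem consumption_step_preservation
    (μ : Measure ℝ) [IsProbabilityMeasure μ]
    (hsupp : μ (Set.Iio 0) = 0)
    (hmean : Integrable (fun x => x) μ)
    (π : ℝ) (hπ : 0 ≤ π)
    (G : ℝ → ℝ)
    (hGconc : ConcaveOn ℝ Set.univ G)
    (hGmono : Monotone G)
    (hGlip : ∀ a b : ℝ, |G a - G b| ≤ π * |a - b|)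
    (H : ℝ → ℝ)
    (hH : ∀ z, H z = ∫ x, (G (max (z - x) 0) - π * max (x - z) 0) ∂μ) :
    (∀ z : ℝ, Integrable (fun x => G (max (z - x) 0) - π * max (x - z) 0) μ) ∧
    ConcaveOn ℝ Set.univ H ∧ Monotone H ∧
      ∀ z z' : ℝ, |H z - H z'| ≤ π * |z - z'| :=
  consumption_step_preservation_general μ hmean π hπ G hGconc hGmono hGlip H hH
end

section
/- Let p^b ∈ ℝ, let D₀ > 0, let p^s > 0, and let S : ℝ → ℝ be continuous at p^s with D₀ < S(p^s). Then there exists p̂ with 0 < p̂ < p^s such that (p^b − p̂)·min(S(p̂), D₀) > (p^b − p^s)·min(S(p^s), D₀). That is, when total trading supply strictly exceeds total trading demand, the MNO strictly increases its one-slot revenue by lowering the selling price. -/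
/-- When total trading supply strictly exceeds total trading demand, the MNO
strictly increases its one-slot revenue by lowering the selling price. -/
theorem lower_selling_price
    (pb : ℝ) (D₀ : ℝ) (hD₀ : 0 < D₀)
    (ps : ℝ) (hps : 0 < ps)
    (S : ℝ → ℝ) (hS : ContinuousAt S ps) (h : D₀ < S ps) :
    ∃ phat : ℝ, 0 < phat ∧ phat < ps ∧
      (pb - ps) * min (S ps) D₀ < (pb - phat) * min (S phat) D₀ := by
  have hev : ∀ᶠ p in nhds ps, D₀ < S p := hS.eventually (eventually_gt_nhds h)
  obtain ⟨δ, hδ, hball⟩ := Metric.eventually_nhds_iff.mp hev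
  set phat := max (ps - δ/2) (ps/2) with hphat
  have h1 : 0 < phat := lt_max_of_lt_right (by linarith)
  have h2 : phat < ps := max_lt (by linarith) (by linarith)
  have hdist : dist phat ps < δ := by
    rw [Real.dist_eq, abs_lt]
    constructor
    · have : ps - δ/2 ≤ phat := le_max_left _ _
      linarith
    · linarith
  have hSp : D₀ < S phat := hball hdist
  refine ⟨phat, h1, h2, ?_⟩
  rw [min_eq_right h.le, min_eq_right hSp.le]
  nlinarith
end

section
/- Let S, D : ℝ → ℝ be continuous, and suppose the pair (p^s*, p^b*) with 0 < p^s* ≤ p^b* maximizes the MNO's one-slot revenue R(p^s, p^b) = (p^b − p^s)·min(S(p^s), D(p^b)) over the feasible set {(p^s, p^b) : 0 ≤ p^s ≤ p^b}, and that the optimal revenue is strictly positive: R(p^s*, p^b*) > 0. Then the data trading market clears at the optimum: D(p^b*) = S(p^s*). -/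
/-- Revenue-maximizing pricing clears the data trading market: if continuous
supply `S` and demand `D` admit revenue-maximizing prices `(pˢ*, pᵇ*)` with
`0 < pˢ* ≤ pᵇ*` over the feasible set `{(pˢ, pᵇ) : 0 ≤ pˢ ≤ pᵇ}` and the
optimal revenue `(pᵇ* - pˢ*)·min (S pˢ*) (D pᵇ*)` is strictly positive, then
total demand equals total supply at the optimum. -/
theorem revenue_maximizing_prices_clear_market
    (S D : ℝ → ℝ) (hS : Continuous S) (hD : Continuous D)
    (pss pbs : ℝ) (hpss : 0 < pss) (hle : pss ≤ pbs)
    (hmax : ∀ ps pb : ℝ, 0 ≤ ps → ps ≤ pb →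
      (pb - ps) * min (S ps) (D pb) ≤ (pbs - pss) * min (S pss) (D pbs))
    (hpos : 0 < (pbs - pss) * min (S pss) (D pbs)) :
    D pbs = S pss := by
  -- both factors of the positive revenue are positive
  have hgap : 0 < pbs - pss := by
    rcases lt_or_ge 0 (pbs - pss) with h | h
    · exact h
    · nlinarith [hpos, mul_nonpos_of_nonpos_of_nonneg h (le_of_lt (by nlinarith : (0:ℝ) < min (S pss) (D pbs)))]
  have hmin : 0 < min (S pss) (D pbs) := by
    by_contra h
    push_neg at h
    nlinarith [mul_nonpos_of_nonneg_of_nonpos (le_of_lt hgap) h]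
  rcases lt_trichotomy (D pbs) (S pss) with hlt | heq | hgt
  · -- min = D pbs; decrease ps slightly, revenue strictly increases
    exfalso
    have hDpos : 0 < D pbs := lt_of_lt_of_le hmin (min_le_right _ _)
    have hev : ∀ᶠ x in nhds pss, D pbs < S x :=
      ContinuousAt.eventually_lt (f := fun _ => D pbs) continuousAt_const
        (hS.continuousAt (x := pss)) hlt
    rcases Metric.eventually_nhds_iff.mp hev with ⟨δ, hδ, hball⟩
    set ps := pss - min (δ / 2) (pss / 2) with hps
    have hm : 0 < min (δ / 2) (pss / 2) := lt_min (by linarith) (by linarith)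
    have h1 : 0 ≤ ps := by
      have := min_le_right (δ / 2) (pss / 2); simp only [hps]; linarith
    have h2 : ps ≤ pbs := by simp only [hps]; linarith
    have hSps : D pbs < S ps := by
      apply hball
      have := min_le_left (δ / 2) (pss / 2)
      rw [Real.dist_eq]
      rw [abs_lt]
      constructor <;> [skip; skip] <;> simp only [hps] <;> linarith
    have hminps : min (S ps) (D pbs) = D pbs := min_eq_right hSps.le
    have := hmax ps pbs h1 h2
    rw [hminps] at this
    have hmineq : min (S pss) (D pbs) = D pbs := min_eq_right hlt.le
    rw [hmineq] at this
    have hlt' : ps < pss := by simp only [hps]; linarith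
    nlinarith
  · exact heq
  · -- min = S pss; increase pb slightly, revenue strictly increases
    exfalso
    have hSpos : 0 < S pss := lt_of_lt_of_le hmin (min_le_left _ _)
    have hev : ∀ᶠ x in nhds pbs, S pss < D x :=
      ContinuousAt.eventually_lt (f := fun _ => S pss) continuousAt_const
        (hD.continuousAt (x := pbs)) hgt
    rcases Metric.eventually_nhds_iff.mp hev with ⟨δ, hδ, hball⟩
    set pb := pbs + δ / 2 with hpb
    have h2 : pss ≤ pb := by simp only [hpb]; linarith
    have hDpb : S pss < D pb := by
      apply hball
      rw [Real.dist_eq, abs_lt]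
      constructor <;> simp only [hpb] <;> linarith
    have hminpb : min (S pss) (D pb) = S pss := min_eq_left hDpb.le
    have := hmax pss pb hpss.le h2
    rw [hminpb] at this
    have hmineq : min (S pss) (D pbs) = S pss := min_eq_left hgt.le
    rw [hmineq] at this
    have hgt' : pbs < pb := by simp only [hpb]; linarith
    nlinarith
end
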